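/- There exists an absolute constant c > 0 such that the following holds. Let H be an n-vertex graph with a strict linear order < on E(H), let k be a positive integer, and let d = 2|E(H)|/n be the average degree of H. If d ≥ 2k, then H contains at least k·n·(c·d/k)^k distinct monotone k-trails. -/

import Mathlib

/-!
Send each dart of `H` to the dart leaving its head along the least larger edge there. This partial
map on darts is injective and undefined on at most one dart per vertex, so its `j`-th iterate is
defined on all but `j·n` of the `2|E|` darts, and each dart on which it is defined starts its own
greedy monotone `(j+1)`-trail. Hence there are at least `2|E| - (k-1)n ≥ kn` monotone `k`-trails
when `|E| = kn`.

For `|E| > kn`, double counting shows that some edge lies on at least a `k/|E|` fraction of the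
monotone `k`-trails. Deleting it and inducting on `|E|`, Bernoulli's inequality keeps the invariant
`N·(kn)^k ≥ kn·|E|^k`, which for `c = 1/2` is the claim since `c·d/k = |E|/(kn)`.
-/

open SimpleGraph

/-- `lt` is a strict linear order on the edges of `H`. -/
def IsEdgeOrder {V : Type} (H : SimpleGraph V) (lt : Sym2 V → Sym2 V → Prop) : Prop :=
  (∀ e ∈ H.edgeSet, ¬ lt e e) ∧
  (∀ e₁ ∈ H.edgeSet, ∀ e₂ ∈ H.edgeSet, ∀ e₃ ∈ H.edgeSet, lt e₁ e₂ → lt e₂ e₃ → lt e₁ e₃) ∧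
  (∀ e₁ ∈ H.edgeSet, ∀ e₂ ∈ H.edgeSet, e₁ ≠ e₂ → lt e₁ e₂ ∨ lt e₂ e₁)

section PartialInjection

variable {α : Type*} {f : α → Option α}

theorem bind_iterate_inj (hf : ∀ ⦃a b c⦄, f a = some c → f b = some c → a = b) (j : ℕ)
    {a b c : α} (ha : (Option.bind · f)^[j] (some a) = some c)
    (hb : (Option.bind · f)^[j] (some b) = some c) : a = b := by
  induction j generalizing c with
  | zero => simpa using ha.trans hb.symm
  | succ j ih =>
    rw [Function.iterate_succ_apply'] at ha hb
    obtain ⟨a', ha', hfa⟩ := Option.bind_eq_some_iff.mp ha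
    obtain ⟨b', hb', hfb⟩ := Option.bind_eq_some_iff.mp hb
    exact ih ha' (hf hfb hfa ▸ hb')

theorem card_le_ncard_bind_iterate_isSome_add [Finite α]
    (hf : ∀ ⦃a b c⦄, f a = some c → f b = some c → a = b) (j : ℕ) :
    Nat.card α ≤
      {a | ((Option.bind · f)^[j] (some a)).isSome}.ncard + j * {a | f a = none}.ncard := by
  induction j with
  | zero => simp [Set.ncard_univ]
  | succ j ih =>
    set g : Option α → Option α := (Option.bind · f)
    have hsplit : {a | (g^[j] (some a)).isSome} ⊆
        {a | (g^[j + 1] (some a)).isSome} ∪ {a | ∃ c, g^[j] (some a) = some c ∧ f c = none} := by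
      intro a ha
      obtain ⟨c, hc⟩ := Option.isSome_iff_exists.mp ha
      cases hfc : f c
      · exact Or.inr ⟨c, hc, hfc⟩
      · left
        simp [Function.iterate_succ_apply', g, hc, hfc]
    have hdead : {a | ∃ c, g^[j] (some a) = some c ∧ f c = none}.ncard ≤
        {a | f a = none}.ncard := by
      refine Set.ncard_le_ncard_of_injOn (fun a => (g^[j] (some a)).getD a) ?_ ?_
      · rintro a ⟨c, hc, hfc⟩
        simpa [hc] using hfc
      · rintro a ⟨c, hc, -⟩ b ⟨c', hc', -⟩ hab
        simp only [hc, hc', Option.getD_some] at hab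
        exact bind_iterate_inj hf j hc (hab ▸ hc')
    calc Nat.card α ≤ {a | (g^[j] (some a)).isSome}.ncard + j * {a | f a = none}.ncard := ih
      _ ≤ _ := by grw [Set.ncard_le_ncard hsplit, Set.ncard_union_le, hdead]; lia

end PartialInjection

namespace IsEdgeOrder

variable {V : Type} {H : SimpleGraph V} {lt : Sym2 V → Sym2 V → Prop}

theorem mono (h : IsEdgeOrder H lt) {H' : SimpleGraph V} (hle : H' ≤ H) : IsEdgeOrder H' lt := by
  have hsub := edgeSet_mono hle
  exact ⟨fun e he => h.1 e (hsub he),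
    fun e₁ he₁ e₂ he₂ e₃ he₃ => h.2.1 e₁ (hsub he₁) e₂ (hsub he₂) e₃ (hsub he₃),
    fun e₁ he₁ e₂ he₂ => h.2.2 e₁ (hsub he₁) e₂ (hsub he₂)⟩

theorem pairwise_of_isChain (h : IsEdgeOrder H lt) :
    ∀ {l : List (Sym2 V)}, (∀ e ∈ l, e ∈ H.edgeSet) → l.IsChain lt → l.Pairwise lt
  | [], _, _ => .nil
  | [_], _, _ => List.pairwise_singleton _ _
  | a :: b :: l, hl, hc => by
    rw [List.isChain_cons_cons] at hc
    have hbl := h.pairwise_of_isChain (fun e he => hl e (List.mem_cons_of_mem a he)) hc.2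
    refine List.pairwise_cons.2 ⟨fun c hc' => ?_, hbl⟩
    rcases List.mem_cons.mp hc' with rfl | hc'
    · exact hc.1
    · exact h.2.1 a (hl a (by simp)) b (hl b (by simp)) c (hl c (by simp [hc'])) hc.1
        (List.rel_of_pairwise_cons hbl hc')

theorem nodup_of_isChain (h : IsEdgeOrder H lt) {l : List (Sym2 V)}
    (hl : ∀ e ∈ l, e ∈ H.edgeSet) (hc : l.IsChain lt) : l.Nodup :=
  (h.pairwise_of_isChain hl hc).imp_of_mem fun ha _ hab hab' =>
    h.1 _ (hl _ ha) (hab' ▸ hab : lt _ _)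

theorem exists_minimal [Finite V] (h : IsEdgeOrder H lt) {s : Set (Sym2 V)} (hs : s ⊆ H.edgeSet)
    (hne : s.Nonempty) : ∃ a ∈ s, ∀ b ∈ s, ¬ lt b a := by
  have : IsTrans H.edgeSet (lt · ·) := ⟨fun a b c => h.2.1 a a.2 b b.2 c c.2⟩
  have : Std.Irrefl (α := H.edgeSet) (lt · ·) := ⟨fun a => h.1 a a.2⟩
  obtain ⟨x, hx⟩ := hne
  obtain ⟨a, ha, hmin⟩ := (Finite.wellFounded_of_trans_of_irrefl (α := H.edgeSet) (lt · ·)).has_min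
    {e | e.1 ∈ s} ⟨⟨x, hs hx⟩, hx⟩
  exact ⟨a, ha, fun b hb => hmin ⟨b, hs hb⟩ hb⟩

theorem dart_eq_of_snd_eq (h : IsEdgeOrder H lt) {d₁ d₂ : H.Dart} (hs : d₁.snd = d₂.snd)
    (h₁₂ : ¬ lt d₁.edge d₂.edge) (h₂₁ : ¬ lt d₂.edge d₁.edge) : d₁ = d₂ := by
  have he : d₁.edge = d₂.edge := by
    by_contra hne
    rcases h.2.2 _ d₁.edge_mem _ d₂.edge_mem hne with h' | h' <;> contradiction
  rcases (dart_edge_eq_iff d₁ d₂).mp he with rfl | rfl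
  · rfl
  · exact absurd hs.symm d₂.snd_ne_fst

end IsEdgeOrder

section NextDart

variable {V : Type} {H : SimpleGraph V} (lt : Sym2 V → Sym2 V → Prop)

def IsNextDart (d d' : H.Dart) : Prop :=
  d'.fst = d.snd ∧ lt d.edge d'.edge ∧
    ∀ f ∈ H.edgeSet, d.snd ∈ f → lt d.edge f → ¬ lt f d'.edge

open Classical in
noncomputable def nextDart (d : H.Dart) : Option H.Dart :=
  if hd : ∃ d', IsNextDart lt d d' then some hd.choose else none

variable {lt}

theorem isNextDart_of_nextDart_eq_some {d d' : H.Dart} (hd : nextDart lt d = some d') :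
    IsNextDart lt d d' := by
  unfold nextDart at hd
  split_ifs at hd with hex
  exact Option.some_inj.mp hd ▸ hex.choose_spec

theorem IsEdgeOrder.not_lt_of_nextDart_eq_none [Finite V] (h : IsEdgeOrder H lt) {d : H.Dart}
    (hd : nextDart lt d = none) : ∀ f ∈ H.edgeSet, d.snd ∈ f → ¬ lt d.edge f := by
  intro f hf hdf hlt
  obtain ⟨a, ⟨haE, hda, hlta⟩, hmin⟩ := h.exists_minimal
    (s := {f | f ∈ H.edgeSet ∧ d.snd ∈ f ∧ lt d.edge f}) (fun _ hf => hf.1) ⟨f, hf, hdf, hlt⟩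
  obtain ⟨w, rfl⟩ := Sym2.mem_iff_exists.mp hda
  have hnext : IsNextDart lt d ⟨(d.snd, w), haE⟩ :=
    ⟨rfl, hlta, fun f hf hdf hlt => hmin f ⟨hf, hdf, hlt⟩⟩
  unfold nextDart at hd
  exact absurd hd (by simp [show ∃ d', IsNextDart lt d d' from ⟨_, hnext⟩])

theorem IsEdgeOrder.nextDart_inj (h : IsEdgeOrder H lt) ⦃d₁ d₂ δ : H.Dart⦄
    (h₁ : nextDart lt d₁ = some δ) (h₂ : nextDart lt d₂ = some δ) : d₁ = d₂ := by
  obtain ⟨hfst₁, hlt₁, hmin₁⟩ := isNextDart_of_nextDart_eq_some h₁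
  obtain ⟨hfst₂, hlt₂, hmin₂⟩ := isNextDart_of_nextDart_eq_some h₂
  have hs : d₁.snd = d₂.snd := hfst₁.symm.trans hfst₂
  refine h.dart_eq_of_snd_eq hs (fun h12 => ?_) (fun h21 => ?_)
  · exact hmin₁ _ d₂.edge_mem (hs ▸ Sym2.mem_mk_right _ _) h12 hlt₂
  · exact hmin₂ _ d₁.edge_mem (hs ▸ Sym2.mem_mk_right _ _) h21 hlt₁

theorem IsEdgeOrder.ncard_nextDart_eq_none_le [Fintype V] (h : IsEdgeOrder H lt) :
    {d : H.Dart | nextDart lt d = none}.ncard ≤ Fintype.card V := by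
  rw [← Nat.card_eq_fintype_card, ← Set.ncard_univ]
  refine Set.ncard_le_ncard_of_injOn (·.snd) (fun _ _ => Set.mem_univ _) ?_
  intro d₁ h₁ d₂ h₂ (hs : d₁.snd = d₂.snd)
  exact h.dart_eq_of_snd_eq hs
    (h.not_lt_of_nextDart_eq_none h₁ _ d₂.edge_mem (hs ▸ Sym2.mem_mk_right _ _))
    (h.not_lt_of_nextDart_eq_none h₂ _ d₁.edge_mem (hs ▸ Sym2.mem_mk_right _ _))

end NextDart

section MonotoneTrails

variable {V : Type} (H : SimpleGraph V) (lt : Sym2 V → Sym2 V → Prop)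

def monotoneTrails (k : ℕ) : Set ((u : V) × (v : V) × H.Walk u v) :=
  {x | x.2.2.length = k ∧ x.2.2.edges.IsChain lt}

instance [Finite V] (k : ℕ) : Finite (monotoneTrails H lt k) := by
  classical
  have : Fintype V := Fintype.ofFinite V
  let forget : ((u : V) × (v : V) × {p : H.Walk u v // p.length = k}) →
      (u : V) × (v : V) × H.Walk u v := Sigma.map id fun _ => Sigma.map id fun _ => Subtype.val
  exact (Set.finite_range forget).subset fun x hx => ⟨⟨x.1, x.2.1, x.2.2, hx.1⟩, rfl⟩

variable {H lt}

theorem exists_walk_of_bind_iterate_isSome {j : ℕ} {d : H.Dart}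
    (hd : ((Option.bind · (nextDart lt))^[j] (some d)).isSome) :
    ∃ (v : V) (w : H.Walk d.snd v), w.length = j ∧ (d.edge :: w.edges).IsChain lt := by
  induction j generalizing d with
  | zero => exact ⟨d.snd, .nil, rfl, List.isChain_singleton _⟩
  | succ j ih =>
    rw [Function.iterate_succ_apply, Option.bind_some] at hd
    cases hnext : nextDart lt d with
    | none => simp [hnext, Function.iterate_fixed] at hd
    | some d' =>
      obtain ⟨hfst, hlt, -⟩ := isNextDart_of_nextDart_eq_some hnext
      obtain ⟨v, w, hlen, hchain⟩ := ih (hnext ▸ hd)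
      refine ⟨v, (Walk.cons d'.adj w).copy hfst rfl, by simp [hlen], ?_⟩
      rw [Walk.edges_copy, Walk.edges_cons, List.isChain_cons_cons]
      exact ⟨hlt, hchain⟩

theorem ncard_bind_iterate_isSome_le [Finite V] (j : ℕ) :
    {d : H.Dart | ((Option.bind · (nextDart lt))^[j] (some d)).isSome}.ncard ≤
      (monotoneTrails H lt (j + 1)).ncard := by
  rw [← Set.ncard_image_of_injective _ (Option.some_injective _)]
  refine (Set.ncard_le_ncard (t := (·.2.2.darts.head?) '' monotoneTrails H lt (j + 1)) ?_
    (Set.toFinite _)).trans (Set.ncard_image_le (Set.toFinite _))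
  rintro _ ⟨d, hd, rfl⟩
  obtain ⟨v, w, hlen, hchain⟩ := exists_walk_of_bind_iterate_isSome hd
  exact ⟨⟨d.fst, v, .cons d.adj w⟩, ⟨by simp [hlen], hchain⟩, rfl⟩

theorem IsEdgeOrder.two_mul_ncard_edgeSet_le [Fintype V] (h : IsEdgeOrder H lt) (j : ℕ) :
    2 * H.edgeSet.ncard ≤ (monotoneTrails H lt (j + 1)).ncard + j * Fintype.card V := by
  classical
  calc 2 * H.edgeSet.ncard = Nat.card H.Dart := by
        rw [Nat.card_eq_fintype_card, dart_card_eq_twice_card_edges, ← coe_edgeFinset,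
          Set.ncard_coe_finset]
    _ ≤ _ := card_le_ncard_bind_iterate_isSome_add h.nextDart_inj j
    _ ≤ _ := by grw [ncard_bind_iterate_isSome_le, h.ncard_nextDart_eq_none_le]

end MonotoneTrails

section Deletion

variable {V : Type} [Finite V] {H : SimpleGraph V} {lt : Sym2 V → Sym2 V → Prop}

theorem ncard_monotoneTrails_deleteEdges_add_le (k : ℕ) (e : Sym2 V) :
    (monotoneTrails (H.deleteEdges {e}) lt k).ncard +
      {x ∈ monotoneTrails H lt k | e ∈ x.2.2.edges}.ncard ≤ (monotoneTrails H lt k).ncard := by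
  have hle : H.deleteEdges {e} ≤ H := deleteEdges_le _
  set ι : ((u : V) × (v : V) × (H.deleteEdges {e}).Walk u v) → (u : V) × (v : V) × H.Walk u v :=
    Sigma.map id fun _ => Sigma.map id fun _ => Walk.mapLe hle
  have hι : ι.Injective := Function.injective_id.sigma_map fun _ =>
    Function.injective_id.sigma_map fun _ =>
      Walk.map_injective_of_injective Function.injective_id _ _
  rw [← Set.ncard_image_of_injective _ hι, ← Set.ncard_union_eq]
  · refine Set.ncard_le_ncard ?_
    rintro _ (⟨x, hx, rfl⟩ | ⟨hx, -⟩)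
    · simpa [ι, Sigma.map, monotoneTrails] using hx
    · exact hx
  · rw [Set.disjoint_left]
    rintro _ ⟨x, -, rfl⟩ ⟨-, he⟩
    have := x.2.2.edges_subset_edgeSet (by simpa [ι, Sigma.map] using he)
    simp at this

theorem IsEdgeOrder.sum_ncard_mem_edges (h : IsEdgeOrder H lt) (k : ℕ) :
    ∑ e ∈ H.edgeSet.toFinite.toFinset, {x ∈ monotoneTrails H lt k | e ∈ x.2.2.edges}.ncard =
      k * (monotoneTrails H lt k).ncard := by
  classical
  set T := (monotoneTrails H lt k).toFinite.toFinset
  set E := H.edgeSet.toFinite.toFinset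
  have hthrough (e : Sym2 V) : {x ∈ monotoneTrails H lt k | e ∈ x.2.2.edges}.ncard =
      (T.bipartiteBelow (fun x e => e ∈ x.2.2.edges) e).card := by
    rw [← Set.ncard_coe_finset]
    congr
    ext
    simp [T]
  have hedges : ∀ x ∈ T, (E.bipartiteAbove (fun x e => e ∈ x.2.2.edges) x).card = k := by
    intro x hx
    have hx : x ∈ monotoneTrails H lt k := by simpa [T] using hx
    have hsub : ∀ e ∈ x.2.2.edges, e ∈ H.edgeSet := fun _ he => x.2.2.edges_subset_edgeSet he
    rw [show E.bipartiteAbove _ x = x.2.2.edges.toFinset by ext; simpa [E] using hsub _,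
      List.toFinset_card_of_nodup (h.nodup_of_isChain hsub hx.2), Walk.length_edges, hx.1]
  simp_rw [hthrough]
  rw [← Finset.sum_card_bipartiteAbove_eq_sum_card_bipartiteBelow, Finset.sum_congr rfl hedges,
    Finset.sum_const, smul_eq_mul, Set.ncard_eq_toFinset_card _ (Set.toFinite _), mul_comm]

theorem IsEdgeOrder.exists_mul_ncard_deleteEdges_add_le (h : IsEdgeOrder H lt) (k : ℕ)
    (hE : H.edgeSet.Nonempty) : ∃ e ∈ H.edgeSet,
      H.edgeSet.ncard * (monotoneTrails (H.deleteEdges {e}) lt k).ncard +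
        k * (monotoneTrails H lt k).ncard ≤ H.edgeSet.ncard * (monotoneTrails H lt k).ncard := by
  obtain ⟨e, he, hthrough⟩ := Finset.exists_le_of_sum_le (s := H.edgeSet.toFinite.toFinset)
    (f := fun _ => k * (monotoneTrails H lt k).ncard)
    (g := fun e => H.edgeSet.ncard * {x ∈ monotoneTrails H lt k | e ∈ x.2.2.edges}.ncard)
    (by simpa using hE) (by
      rw [Finset.sum_const, ← Finset.mul_sum, h.sum_ncard_mem_edges, smul_eq_mul,
        ← Set.ncard_eq_toFinset_card _ (Set.toFinite _), mul_left_comm])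
  refine ⟨e, by simpa using he, ?_⟩
  grw [hthrough, ← ncard_monotoneTrails_deleteEdges_add_le k e, mul_add]

end Deletion

/-- Bernoulli's inequality `(1 - 1/(m+1))^k ≥ 1 - k/(m+1)`, cleared of denominators. -/
theorem Nat.succ_sub_mul_succ_pow_le (m k : ℕ) : (m + 1 - k) * (m + 1) ^ k ≤ (m + 1) * m ^ k := by
  induction k with
  | zero => simp
  | succ k ih =>
    have hstep : (m - k) * (m + 1) ≤ (m + 1 - k) * m := by
      rcases le_or_gt k m with hkm | hkm
      · obtain ⟨r, rfl⟩ := Nat.exists_eq_add_of_le hkm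
        rw [show k + r + 1 - k = r + 1 by omega, Nat.add_sub_cancel_left]
        nlinarith
      · simp [Nat.sub_eq_zero_of_le hkm.le]
    calc (m + 1 - (k + 1)) * (m + 1) ^ (k + 1) = (m - k) * (m + 1) * (m + 1) ^ k := by
          rw [Nat.add_sub_add_right]; ring
      _ ≤ (m + 1 - k) * m * (m + 1) ^ k := by gcongr
      _ = m * ((m + 1 - k) * (m + 1) ^ k) := by ring
      _ ≤ m * ((m + 1) * m ^ k) := by gcongr
      _ = (m + 1) * m ^ (k + 1) := by ring

theorem IsEdgeOrder.mul_pow_le_ncard_mul_pow {V : Type} [Fintype V] {H : SimpleGraph V}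
    {lt : Sym2 V → Sym2 V → Prop} (h : IsEdgeOrder H lt) {k : ℕ} (hk : 0 < k)
    (hm : k * Fintype.card V ≤ H.edgeSet.ncard) :
    k * Fintype.card V * H.edgeSet.ncard ^ k ≤
      (monotoneTrails H lt k).ncard * (k * Fintype.card V) ^ k := by
  set n := Fintype.card V
  rcases Nat.eq_zero_or_pos n with hn | hn
  · simp [hn]
  obtain ⟨m, hmH⟩ : ∃ m, H.edgeSet.ncard = m := ⟨_, rfl⟩
  rw [hmH] at hm ⊢
  induction m, hm using Nat.le_induction generalizing H with
  | base =>
    obtain ⟨j, rfl⟩ := Nat.exists_eq_add_one_of_ne_zero hk.ne'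
    have hbase := h.two_mul_ncard_edgeSet_le j
    rw [hmH] at hbase
    gcongr
    nlinarith
  | succ m hkm ih =>
    obtain ⟨e, he, hdel⟩ := h.exists_mul_ncard_deleteEdges_add_le k
      (Set.nonempty_of_ncard_ne_zero (by omega))
    have hm' : (H.deleteEdges {e}).edgeSet.ncard = m := by
      rw [edgeSet_deleteEdges, Set.ncard_sdiff_singleton_of_mem he, hmH, Nat.add_sub_cancel]
    have ih' := ih (h.mono (deleteEdges_le _)) hm'
    rw [hmH] at hdel
    set N := (monotoneTrails H lt k).ncard
    set N' := (monotoneTrails (H.deleteEdges {e}) lt k).ncard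
    have hdel' : (m + 1) * N' ≤ (m + 1 - k) * N := by rw [Nat.sub_mul]; omega
    have hpos : 0 < m + 1 - k := by have := Nat.le_mul_of_pos_right k hn; omega
    refine Nat.le_of_mul_le_mul_right ?_ hpos
    calc k * n * (m + 1) ^ k * (m + 1 - k) = k * n * ((m + 1 - k) * (m + 1) ^ k) := by ring
      _ ≤ k * n * ((m + 1) * m ^ k) := Nat.mul_le_mul_left _ (Nat.succ_sub_mul_succ_pow_le m k)
      _ = (m + 1) * (k * n * m ^ k) := by ring
      _ ≤ (m + 1) * (N' * (k * n) ^ k) := by gcongr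
      _ = (m + 1) * N' * (k * n) ^ k := by ring
      _ ≤ (m + 1 - k) * N * (k * n) ^ k := by gcongr
      _ = N * (k * n) ^ k * (m + 1 - k) := by ring

/-- **full monotone counting lemma.** There is an absolute constant `c > 0`
such that every `n`-vertex graph with average degree `d = 2|E(H)|/n ≥ 2k` contains at
least `k·n·(c·d/k)^k` distinct monotone `k`-trails. -/
theorem monotone_trail_full_count :
    ∃ c : ℝ, 0 < c ∧
      ∀ (V : Type) [Fintype V], ∀ (H : SimpleGraph V) (lt : Sym2 V → Sym2 V → Prop),
        IsEdgeOrder H lt →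
        ∀ k : ℕ, 0 < k → 0 < Fintype.card V →
          ∀ d : ℝ, d = 2 * H.edgeSet.ncard / Fintype.card V →
            2 * (k : ℝ) ≤ d →
            (k : ℝ) * Fintype.card V * (c * d / k) ^ k ≤
              ({x : (u : V) × (v : V) × H.Walk u v |
                  x.2.2.length = k ∧ List.Chain' lt x.2.2.edges}.ncard : ℝ) := by
  refine ⟨1 / 2, by norm_num, fun V _ H lt h k hk hV d hd hdk => ?_⟩
  change _ ≤ ((monotoneTrails H lt k).ncard : ℝ)
  have hn : (0 : ℝ) < Fintype.card V := by exact_mod_cast hV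
  have hkn : k * Fintype.card V ≤ H.edgeSet.ncard := by
    rw [hd, le_div_iff₀ hn] at hdk
    exact_mod_cast (by linarith : (k : ℝ) * Fintype.card V ≤ H.edgeSet.ncard)
  have hc : 1 / 2 * d / k = H.edgeSet.ncard / (k * Fintype.card V) := by
    rw [hd]
    field_simp
  rw [hc, div_pow, mul_div_assoc', div_le_iff₀ (by positivity)]
  exact_mod_cast h.mul_pow_le_ncard_mul_pow hk hkn
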